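/- arXiv:0808.0412 — 4 statements merged into one kernel-verified Lean document; each statement's English description precedes it below -/
import Mathlib

section
/- Let E be a compact Polish space, n ∈ ℕ, f : E^n → ℝ bounded and measurable, μ a Borel probability measure on E, ζ ∈ Δ, and x = (x_1, x_2, …) ∈ E^ℕ. Then ∫_{E^n} f d((1−|ζ|)μ + Σ_{i=1}^∞ ζ_i δ_{x_i})^{⊗n} = Σ_{φ : {1,…,n} → ℤ_{≥0}} (1−|ζ|)^{a(φ)} · ( ∏_{1 ≤ j ≤ n, φ(j) > 0} ζ_{φ(j)} ) · ∫_{E^{a(φ)}} f(η(φ,x,y)) μ^{⊗ a(φ)}(dy), where a(φ) := #{1 ≤ j ≤ n : φ(j) = 0}, and η(φ,x,y) ∈ E^n is defined by η(φ,x,y)_j = x_{φ(j)} if φ(j) > 0, and η(φ,x,y)_j = y_k with k = #{1 ≤ j' ≤ j : φ(j') = 0} if φ(j) = 0 (the sum over the countable set of functions φ being absolutely convergent). -/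
open MeasureTheory Finset
open scoped Classical

noncomputable section

/-- The infinite simplex `Δ = {ζ : ζ_1 ≥ ζ_2 ≥ ⋯ ≥ 0, Σ ζ_i ≤ 1}` (indexed from 0). -/
def DeltaSet : Set (ℕ → ℝ) :=
  {ζ | (∀ i, 0 ≤ ζ i) ∧ Antitone ζ ∧ ∀ n, ∑ i ∈ Finset.range n, ζ i ≤ 1}

/-- `|ζ| = Σ_i ζ_i`. -/
def absΔ (ζ : ℕ → ℝ) : ℝ := ∑' i, ζ i

variable {E : Type} [MeasurableSpace E]

/-- The resampled measure `(1-|ζ|)μ + Σ_i ζ_i δ_{x_i}`. -/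
def resample (μ : Measure E) (ζ : ℕ → ℝ) (x : ℕ → E) : Measure E :=
  ENNReal.ofReal (1 - absΔ ζ) • μ +
    Measure.sum fun i => ENNReal.ofReal (ζ i) • Measure.dirac (x i)

/-- `a(φ)`, the number of indices `j` with `φ(j) = 0`. -/
def numZeros {n : ℕ} (φ : Fin n → ℕ) : ℕ := (Finset.univ.filter fun j => φ j = 0).card

/-- The vector `η(φ,x,y) ∈ E^n`: `η_j = x_{φ(j)}` if `φ(j) > 0` and otherwise the `k`-th
entry of `y`, where `k` is the number of indices `j' ≤ j` with `φ(j') = 0` (here zero-based: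
`x : ℕ → E` is indexed from 0, so `x_{φ(j)}` becomes `x (φ j - 1)`). -/
def eta {n : ℕ} (φ : Fin n → ℕ) (x : ℕ → E) (y : Fin (numZeros φ) → E) : Fin n → E :=
  fun j =>
    if h : φ j = 0 then
      y ⟨(Finset.univ.filter fun j' => j' < j ∧ φ j' = 0).card, by
        apply Finset.card_lt_card
        rw [Finset.ssubset_iff_of_subset]
        · exact ⟨j, by simpa using h, by simp⟩
        · intro a ha
          simp only [Finset.mem_filter, Finset.mem_univ, true_and] at ha ⊢
          exact ha.2⟩
    else x (φ j - 1)

/-!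
Write the resampled measure as the countable sum `Σ_k w_k ν_k` with `ν_0 = μ`, `w_0 = 1 - |ζ|` and
`ν_{k+1} = δ_{x_k}`, `w_{k+1} = ζ_k`. Its `n`-th power is then `Σ_φ (∏_j w_{φ j}) ⊗_j ν_{φ j}`, and
`⊗_j ν_{φ j}` is the image of `μ^{⊗ a(φ)}` under `y ↦ η(φ, x, y)`: the `μ`-coordinates are filled
in order from `y`, the others are constant. As `f` is bounded and the resampled measure is a
probability measure, `f` is integrable against the sum, whose integral is then the absolutely
convergent sum of the integrals.
-/

open scoped ENNReal

theorem ENNReal.tsum_pi_prod_eq_prod_tsum {α : Type*} :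
    ∀ {n : ℕ} (g : Fin n → α → ℝ≥0∞), ∑' φ : Fin n → α, ∏ i, g i (φ i) = ∏ i, ∑' a, g i a
  | 0, g => by simp
  | n + 1, g => by
    rw [← (Fin.consEquiv fun _ => α).tsum_eq, ENNReal.tsum_prod', Fin.prod_univ_succ,
      ← ENNReal.tsum_pi_prod_eq_prod_tsum fun i => g i.succ, ← ENNReal.tsum_mul_right]
    simp_rw [← ENNReal.tsum_mul_left, Fin.consEquiv_apply, Fin.prod_univ_succ, Fin.cons_zero,
      Fin.cons_succ]

namespace MeasureTheory.Measure

theorem pi_sum {α κ : Type*} [MeasurableSpace α] {n : ℕ} (m : κ → Measure α)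
    [∀ k, SigmaFinite (m k)] [SigmaFinite (sum m)] :
    Measure.pi (fun _ : Fin n => sum m) =
      sum fun φ : Fin n → κ => Measure.pi fun i => m (φ i) := by
  refine pi_eq fun s hs => ?_
  simp_rw [sum_apply _ (MeasurableSet.univ_pi hs), pi_pi, sum_apply _ (hs _)]
  exact ENNReal.tsum_pi_prod_eq_prod_tsum fun i k => m k (s i)

theorem pi_smul {ι : Type*} [Fintype ι] {α : ι → Type*} [∀ i, MeasurableSpace (α i)]
    (c : ι → ℝ≥0∞) (ν : ∀ i, Measure (α i)) [∀ i, SigmaFinite (ν i)]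
    [∀ i, SigmaFinite (c i • ν i)] :
    Measure.pi (fun i => c i • ν i) = (∏ i, c i) • Measure.pi ν := by
  refine pi_eq fun s hs => ?_
  simp only [smul_apply, smul_eq_mul, pi_pi, Finset.prod_mul_distrib]

end MeasureTheory.Measure

section Resample

variable {n : ℕ} (φ : Fin n → ℕ)

def zeroRank (j : {j : Fin n // φ j = 0}) : Fin (numZeros φ) :=
  ⟨#{j' | j' < j.1 ∧ φ j' = 0}, Finset.card_lt_card <| Finset.ssubset_iff_of_subset
    (fun _ => by simp +contextual) |>.2 ⟨j, by simp [j.2], by simp⟩⟩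

theorem zeroRank_strictMono : StrictMono (zeroRank φ) := by
  intro i j (hij : i.1 < j.1)
  refine Fin.mk_lt_mk.2 <| Finset.card_lt_card <|
    (Finset.ssubset_iff_of_subset fun _ => ?_).2 ⟨i, by simp [hij, i.2], by simp⟩
  simp only [mem_filter, mem_univ, true_and]
  exact fun h => ⟨h.1.trans hij, h.2⟩

theorem zeroRank_bijective : Function.Bijective (zeroRank φ) := by
  rw [Fintype.bijective_iff_injective_and_card, Fintype.card_subtype, Fintype.card_fin]
  exact ⟨(zeroRank_strictMono φ).injective, rfl⟩

def zeroRankEquiv : {j : Fin n // φ j = 0} ≃ Fin (numZeros φ) :=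
  Equiv.ofBijective _ (zeroRank_bijective φ)

variable {φ} {X : Type} (x : ℕ → X) (y : Fin (numZeros φ) → X)

theorem eta_of_eq_zero {j : Fin n} (h : φ j = 0) : eta φ x y j = y (zeroRankEquiv φ ⟨j, h⟩) := by
  simp only [eta, dif_pos h]; rfl

theorem eta_of_ne_zero {j : Fin n} (h : φ j ≠ 0) : eta φ x y j = x (φ j - 1) := by
  simp only [eta, dif_neg h]

theorem eta_preimage_univ_pi (s : Fin n → Set X) :
    eta φ x ⁻¹' Set.univ.pi s =
      if ∀ j, φ j ≠ 0 → x (φ j - 1) ∈ s j then Set.univ.pi fun i => s ((zeroRankEquiv φ).symm i)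
      else ∅ := by
  split_ifs with hx
  · ext y
    simp only [Set.mem_preimage, Set.mem_univ_pi, (zeroRankEquiv φ).symm.forall_congr_left,
      Equiv.symm_symm, Equiv.symm_apply_apply]
    refine ⟨fun h j => by simpa [eta_of_eq_zero x y j.2] using h j, fun h j => ?_⟩
    by_cases hj : φ j = 0
    · simpa [eta_of_eq_zero x y hj] using h ⟨j, hj⟩
    · simpa [eta_of_ne_zero x y hj] using hx j hj
  · push Not at hx
    obtain ⟨j, hj, hxj⟩ := hx
    refine Set.eq_empty_of_forall_notMem fun y hy => hxj ?_
    simpa [eta_of_ne_zero x y hj] using hy j trivial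

end Resample

theorem measurable_eta {n : ℕ} (φ : Fin n → ℕ) (x : ℕ → E) : Measurable (eta φ x) := by
  refine measurable_pi_lambda _ fun j => ?_
  by_cases hj : φ j = 0
  · simpa only [eta, dif_pos hj] using measurable_pi_apply _
  · simpa only [eta, dif_neg hj] using measurable_const

/-- Index `0` stands for the `μ`-part of `resample μ ζ x` and `k + 1` for the atom at `x k`,
the same convention as for the values of `φ` in `eta`. -/
def resampleWeight (ζ : ℕ → ℝ) (k : ℕ) : ℝ := if k = 0 then 1 - absΔ ζ else ζ (k - 1)

def resampleAtom (μ : Measure E) (x : ℕ → E) (k : ℕ) : Measure E :=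
  if k = 0 then μ else Measure.dirac (x (k - 1))

section ResampleAtom

variable (μ : Measure E) (x : ℕ → E) (k : ℕ)

instance [SigmaFinite μ] : SigmaFinite (resampleAtom μ x k) := by
  unfold resampleAtom; split <;> infer_instance

instance [IsFiniteMeasure μ] : IsFiniteMeasure (resampleAtom μ x k) := by
  unfold resampleAtom; split <;> infer_instance

instance (r : ℝ) [IsFiniteMeasure μ] :
    IsFiniteMeasure (ENNReal.ofReal r • resampleAtom μ x k) :=
  ⟨ENNReal.mul_lt_top ENNReal.ofReal_lt_top (measure_lt_top _ _)⟩

end ResampleAtom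

theorem resample_eq_sum (μ : Measure E) (ζ : ℕ → ℝ) (x : ℕ → E) :
    resample μ ζ x =
      Measure.sum fun k => ENNReal.ofReal (resampleWeight ζ k) • resampleAtom μ x k := by
  ext s hs
  rw [Measure.sum_apply _ hs, tsum_eq_zero_add' ENNReal.summable]
  simp [resample, resampleWeight, resampleAtom, Measure.sum_apply _ hs]

theorem pi_resampleAtom_eq_map_eta {n : ℕ} (μ : Measure E) [SigmaFinite μ] (x : ℕ → E)
    (φ : Fin n → ℕ) :
    Measure.pi (fun j => resampleAtom μ x (φ j)) =
      (Measure.pi fun _ : Fin (numZeros φ) => μ).map (eta φ x) := by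
  refine Measure.pi_eq fun s hs => ?_
  rw [Measure.map_apply (measurable_eta φ x) (.univ_pi hs), eta_preimage_univ_pi]
  split_ifs with hx
  · rw [Measure.pi_pi, ← Fintype.prod_subtype_mul_prod_subtype (fun j => φ j = 0),
      (zeroRankEquiv φ).symm.prod_comp (fun j => μ (s j)), ← mul_one (∏ i, _)]
    congr 1
    · exact Finset.prod_congr rfl fun j _ => by simp [resampleAtom, j.2]
    · refine (Finset.prod_eq_one fun (j : {j // φ j ≠ 0}) _ => ?_).symm
      simp [resampleAtom, j.2, hs j, hx j j.2]
  · push Not at hx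
    obtain ⟨j, hj, hxj⟩ := hx
    rw [measure_empty]
    exact (Finset.prod_eq_zero (Finset.mem_univ j) (by simp [resampleAtom, hj, hs j, hxj])).symm

theorem summable_of_mem_deltaSet {ζ : ℕ → ℝ} (hζ : ζ ∈ DeltaSet) : Summable ζ :=
  summable_of_sum_range_le hζ.1 hζ.2.2

theorem absΔ_le_one {ζ : ℕ → ℝ} (hζ : ζ ∈ DeltaSet) : absΔ ζ ≤ 1 :=
  (summable_of_mem_deltaSet hζ).tsum_le_of_sum_range_le hζ.2.2

theorem resampleWeight_nonneg {ζ : ℕ → ℝ} (hζ : ζ ∈ DeltaSet) (k : ℕ) :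
    0 ≤ resampleWeight ζ k := by
  unfold resampleWeight
  split
  · linarith [absΔ_le_one hζ]
  · exact hζ.1 _

theorem prod_resampleWeight {n : ℕ} (ζ : ℕ → ℝ) (φ : Fin n → ℕ) :
    ∏ j, resampleWeight ζ (φ j) =
      (1 - absΔ ζ) ^ numZeros φ * ∏ j ∈ Finset.univ.filter fun j => φ j ≠ 0, ζ (φ j - 1) := by
  simp only [resampleWeight]
  rw [Finset.prod_ite, Finset.prod_const]
  rfl

theorem isProbabilityMeasure_resample (μ : Measure E) [IsProbabilityMeasure μ] (x : ℕ → E)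
    {ζ : ℕ → ℝ} (hζ : ζ ∈ DeltaSet) : IsProbabilityMeasure (resample μ ζ x) := by
  constructor
  have h1 : 0 ≤ 1 - absΔ ζ := by linarith [absΔ_le_one hζ]
  simp only [resample, Measure.add_apply, Measure.smul_apply, Measure.sum_apply _ .univ,
    measure_univ, smul_eq_mul, mul_one]
  rw [← ENNReal.ofReal_tsum_of_nonneg hζ.1 (summable_of_mem_deltaSet hζ),
    ← ENNReal.ofReal_add h1 (tsum_nonneg hζ.1)]
  simp [absΔ]

theorem integral_pi_resampleWeight_smul_resampleAtom {n : ℕ} (μ : Measure E)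
    [IsFiniteMeasure μ] (x : ℕ → E) {ζ : ℕ → ℝ} (hζ : ζ ∈ DeltaSet) {f : (Fin n → E) → ℝ}
    (hf : Measurable f) (φ : Fin n → ℕ) :
    ∫ z, f z ∂(Measure.pi fun j =>
        ENNReal.ofReal (resampleWeight ζ (φ j)) • resampleAtom μ x (φ j)) =
      (1 - absΔ ζ) ^ numZeros φ * (∏ j ∈ Finset.univ.filter fun j => φ j ≠ 0, ζ (φ j - 1)) *
        ∫ y, f (eta φ x y) ∂(Measure.pi fun _ : Fin (numZeros φ) => μ) := by
  rw [Measure.pi_smul, pi_resampleAtom_eq_map_eta, integral_smul_measure,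
    integral_map (measurable_eta φ x).aemeasurable hf.aestronglyMeasurable,
    ← ENNReal.ofReal_prod_of_nonneg fun j _ => resampleWeight_nonneg hζ _,
    ENNReal.toReal_ofReal (Finset.prod_nonneg fun j _ => resampleWeight_nonneg hζ _),
    prod_resampleWeight, smul_eq_mul]

theorem integral_pow_resample_eq_tsum_general
    (E : Type) [MeasurableSpace E]
    (n : ℕ) (f : (Fin n → E) → ℝ)
    (hf : Measurable f) (hfbdd : ∃ C, ∀ x, |f x| ≤ C)
    (μ : Measure E) [IsProbabilityMeasure μ]
    (ζ : ℕ → ℝ) (hζ : ζ ∈ DeltaSet) (x : ℕ → E) :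
    Summable (fun φ : Fin n → ℕ =>
      (1 - absΔ ζ) ^ numZeros φ
        * (∏ j ∈ Finset.univ.filter fun j => φ j ≠ 0, ζ (φ j - 1))
        * ∫ y, f (eta φ x y) ∂(Measure.pi fun _ : Fin (numZeros φ) => μ)) ∧
    ∫ z, f z ∂(Measure.pi fun _ : Fin n => resample μ ζ x) =
      ∑' φ : Fin n → ℕ,
        (1 - absΔ ζ) ^ numZeros φ
          * (∏ j ∈ Finset.univ.filter fun j => φ j ≠ 0, ζ (φ j - 1))
          * ∫ y, f (eta φ x y) ∂(Measure.pi fun _ : Fin (numZeros φ) => μ) := by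
  obtain ⟨C, hC⟩ := hfbdd
  have := isProbabilityMeasure_resample μ x hζ
  have hfi : Integrable f (Measure.pi fun _ : Fin n => resample μ ζ x) :=
    .of_bound hf.aestronglyMeasurable C (.of_forall hC)
  have : IsFiniteMeasure (Measure.sum fun k =>
      ENNReal.ofReal (resampleWeight ζ k) • resampleAtom μ x k) := by
    rw [← resample_eq_sum]; infer_instance
  rw [resample_eq_sum, Measure.pi_sum] at hfi ⊢
  have hsum := hasSum_integral_measure hfi
  simp_rw [integral_pi_resampleWeight_smul_resampleAtom μ x hζ hf] at hsum
  exact ⟨hsum.summable, hsum.tsum_eq.symm⟩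

/-- expansion of `∫ f d((1-|ζ|)μ + Σ_i ζ_i δ_{x_i})^{⊗n}` as an absolutely
convergent sum over maps `φ : {1,…,n} → ℤ_{≥0}`. -/
theorem integral_pow_resample_eq_tsum
    (E : Type) [TopologicalSpace E] [CompactSpace E] [PolishSpace E]
    [MeasurableSpace E] [BorelSpace E]
    (n : ℕ) (hn : 0 < n) (f : (Fin n → E) → ℝ)
    (hf : Measurable f) (hfbdd : ∃ C, ∀ x, |f x| ≤ C)
    (μ : Measure E) [IsProbabilityMeasure μ]
    (ζ : ℕ → ℝ) (hζ : ζ ∈ DeltaSet) (x : ℕ → E) :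
    Summable (fun φ : Fin n → ℕ =>
      (1 - absΔ ζ) ^ numZeros φ
        * (∏ j ∈ Finset.univ.filter fun j => φ j ≠ 0, ζ (φ j - 1))
        * ∫ y, f (eta φ x y) ∂(Measure.pi fun _ : Fin (numZeros φ) => μ)) ∧
    ∫ z, f z ∂(Measure.pi fun _ : Fin n => resample μ ζ x) =
      ∑' φ : Fin n → ℕ,
        (1 - absΔ ζ) ^ numZeros φ
          * (∏ j ∈ Finset.univ.filter fun j => φ j ≠ 0, ζ (φ j - 1))
          * ∫ y, f (eta φ x y) ∂(Measure.pi fun _ : Fin (numZeros φ) => μ) :=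
  integral_pow_resample_eq_tsum_general E n f hf hfbdd μ ζ hζ x

end
end

section
/- For every ζ ∈ Δ and every n ∈ ℕ, Σ_{π = {A_1,…,A_p} ∈ P_n, π not the partition into singletons} Σ_{l=0}^{s(π)} binom(s(π), l) (1−|ζ|)^{s(π)−l} Σ_{i_1,…,i_{p−s(π)+l} ∈ ℕ pairwise distinct} ζ_{i_1}^{|A_1|} ⋯ ζ_{i_{p−s(π)+l}}^{|A_{p−s(π)+l}|} ≤ (B_n − 1)·(ζ,ζ), where P_n is the set of partitions of {1,…,n}, B_n := |P_n| is the n-th Bell number, the blocks A_1,…,A_p of each partition are enumerated so that their sizes are decreasing, and s(π) denotes the number of singleton blocks of π. -/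
/-!
Every partition other than the one into singletons has a block of size at least two. Forgetting
that the indices must be distinct, that block contributes at most `(ζ,ζ)` to the distinct sum,
each of the `l` extra singletons at most `|ζ|` and every other block at most `|ζ| ≤ 1`. The
binomial theorem then collapses the `l`-sum to `(ζ,ζ) (|ζ| + (1 - |ζ|))^s = (ζ,ζ)`, and there
are `B_n - 1` such partitions.
-/

open MeasureTheory Finset
open scoped Classical

noncomputable section

/-- `(ζ,ζ) = Σ_i ζ_i²`. -/
def sqΔ (ζ : ℕ → ℝ) : ℝ := ∑' i, ζ i ^ 2

/-- The sum over pairwise distinct indices `i : ι → ℕ` of `∏_j ζ_{i_j}^{e_j}`. -/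
def distinctSum (ζ : ℕ → ℝ) {ι : Type} [Fintype ι] (e : ι → ℕ) : ℝ :=
  ∑' φ : ι → ℕ, if Function.Injective φ then ∏ i, ζ (φ i) ^ e i else 0

/-- The integrand `Σ_{l=0}^{s} C(s,l) (1-|ζ|)^{s-l} Σ_{distinct} ζ_{i_1}^{k_1} ⋯` appearing
in the coalescence rates, for a family of block sizes `K : ι → ℕ`; here `s` is the number of
indices with `K i = 1`, and the blocks of size `≥ 2` carry the exponents `K i`. -/
def rateIntegrand (ζ : ℕ → ℝ) {ι : Type} [Fintype ι] [DecidableEq ι] (K : ι → ℕ) : ℝ :=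
  ∑ l ∈ Finset.range ((Finset.univ.filter fun i => K i = 1).card + 1),
    ((Finset.univ.filter fun i => K i = 1).card.choose l : ℝ)
      * (1 - absΔ ζ) ^ ((Finset.univ.filter fun i => K i = 1).card - l)
      * distinctSum ζ (Sum.elim (fun i : {i : ι // 2 ≤ K i} => K i.1) (fun _ : Fin l => 1))

theorem Real.tsum_ite_injective_prod_le {ι κ : Type*} [Fintype ι] [DecidableEq κ]
    {f : ι → κ → ℝ} {c : ι → ℝ} (hf : ∀ i j, 0 ≤ f i j)
    (hc : ∀ i (t : Finset κ), ∑ j ∈ t, f i j ≤ c i) :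
    (∑' φ : ι → κ, if Function.Injective φ then ∏ i, f i (φ i) else 0) ≤ ∏ i, c i := by
  have hprod : ∀ φ : ι → κ, 0 ≤ ∏ i, f i (φ i) := fun φ => prod_nonneg fun i _ => hf i (φ i)
  refine Real.tsum_le_of_sum_le (fun φ => by dsimp only; split_ifs <;> simp [hprod]) fun S => ?_
  let T : ι → Finset κ := fun i => S.image fun φ => φ i
  calc ∑ φ ∈ S, (if Function.Injective φ then ∏ i, f i (φ i) else 0)
      ≤ ∑ φ ∈ S, ∏ i, f i (φ i) :=
        sum_le_sum fun φ _ => by split_ifs <;> simp [hprod]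
    _ ≤ ∑ φ ∈ Fintype.piFinset T, ∏ i, f i (φ i) :=
        sum_le_sum_of_subset_of_nonneg
          (fun φ hφ => Fintype.mem_piFinset.mpr fun i => mem_image_of_mem _ hφ)
          fun φ _ _ => hprod φ
    _ = ∏ i, ∑ j ∈ T i, f i j := (prod_univ_sum T f).symm
    _ ≤ ∏ i, c i := prod_le_prod (fun i _ => sum_nonneg fun j _ => hf i j) fun i _ => hc i _

lemma sqΔ_nonneg (ζ : ℕ → ℝ) : 0 ≤ sqΔ ζ :=
  tsum_nonneg fun _ => sq_nonneg _

namespace DeltaSet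

variable {ζ : ℕ → ℝ}

lemma nonneg (hζ : ζ ∈ DeltaSet) (i : ℕ) : 0 ≤ ζ i := hζ.1 i

lemma summable (hζ : ζ ∈ DeltaSet) : Summable ζ := summable_of_sum_range_le hζ.1 hζ.2.2

lemma le_one (hζ : ζ ∈ DeltaSet) (i : ℕ) : ζ i ≤ 1 :=
  (single_le_sum (fun j _ => nonneg hζ j) (self_mem_range_succ i)).trans (hζ.2.2 _)

lemma absΔ_le_one (hζ : ζ ∈ DeltaSet) : absΔ ζ ≤ 1 := Real.tsum_le_of_sum_range_le hζ.1 hζ.2.2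

lemma pow_le_pow_of_le (hζ : ζ ∈ DeltaSet) {k e : ℕ} (hke : k ≤ e) (i : ℕ) : ζ i ^ e ≤ ζ i ^ k :=
  pow_le_pow_of_le_one (nonneg hζ i) (le_one hζ i) hke

lemma summable_pow (hζ : ζ ∈ DeltaSet) {k : ℕ} (hk : 1 ≤ k) : Summable fun i => ζ i ^ k :=
  (summable hζ).of_nonneg_of_le (fun i => pow_nonneg (nonneg hζ i) k)
    fun i => (pow_le_pow_of_le hζ hk i).trans_eq (pow_one _)

lemma sum_pow_le_tsum_pow (hζ : ζ ∈ DeltaSet) {k e : ℕ} (hk : 1 ≤ k) (hke : k ≤ e)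
    (t : Finset ℕ) :
    ∑ i ∈ t, ζ i ^ e ≤ ∑' i, ζ i ^ k :=
  (sum_le_sum fun i _ => pow_le_pow_of_le hζ hke i).trans
    ((summable_pow hζ hk).sum_le_tsum t fun i _ => pow_nonneg (nonneg hζ i) k)

lemma sum_pow_le_absΔ (hζ : ζ ∈ DeltaSet) {e : ℕ} (he : 1 ≤ e) (t : Finset ℕ) :
    ∑ i ∈ t, ζ i ^ e ≤ absΔ ζ := by
  simpa only [absΔ, pow_one] using sum_pow_le_tsum_pow hζ le_rfl he t

lemma sum_pow_le_sqΔ (hζ : ζ ∈ DeltaSet) {e : ℕ} (he : 2 ≤ e) (t : Finset ℕ) :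
    ∑ i ∈ t, ζ i ^ e ≤ sqΔ ζ :=
  sum_pow_le_tsum_pow hζ one_le_two he t

lemma distinctSum_sumElim_le (hζ : ζ ∈ DeltaSet) {κ : Type} [Fintype κ] (e : κ → ℕ)
    (he : ∀ i, 1 ≤ e i) (i₀ : κ) (hi₀ : 2 ≤ e i₀) (l : ℕ) :
    distinctSum ζ (Sum.elim e fun _ : Fin l => 1) ≤ sqΔ ζ * absΔ ζ ^ l := by
  let c : κ ⊕ Fin l → ℝ := Sum.elim (fun i => if i = i₀ then sqΔ ζ else 1) fun _ => absΔ ζ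
  have hc : ∏ x, c x = sqΔ ζ * absΔ ζ ^ l := by
    simp [c, Fintype.prod_sum_type, prod_ite_eq']
  rw [distinctSum, ← hc]
  refine Real.tsum_ite_injective_prod_le (fun x j => pow_nonneg (nonneg hζ j) _) ?_
  rintro (i | j) t
  · by_cases hi : i = i₀
    · subst hi
      simpa [c] using sum_pow_le_sqΔ hζ hi₀ t
    · simpa [c, hi] using (sum_pow_le_absΔ hζ (he i) t).trans (absΔ_le_one hζ)
  · simpa [c] using sum_pow_le_absΔ hζ le_rfl t

lemma rateIntegrand_le_sqΔ (hζ : ζ ∈ DeltaSet) {ι : Type} [Fintype ι] [DecidableEq ι]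
    (K : ι → ℕ) (hK : ∃ i, 2 ≤ K i) : rateIntegrand ζ K ≤ sqΔ ζ := by
  obtain ⟨i₀, hi₀⟩ := hK
  set s := #{i | K i = 1}
  have h1a : 0 ≤ 1 - absΔ ζ := sub_nonneg.mpr (absΔ_le_one hζ)
  calc rateIntegrand ζ K
      ≤ ∑ l ∈ range (s + 1),
          (s.choose l : ℝ) * (1 - absΔ ζ) ^ (s - l) * (sqΔ ζ * absΔ ζ ^ l) :=
        sum_le_sum fun l _ => mul_le_mul_of_nonneg_left
          (distinctSum_sumElim_le hζ _ (fun i => one_le_two.trans i.2) ⟨i₀, hi₀⟩ hi₀ l)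
          (by positivity)
    _ = sqΔ ζ * (absΔ ζ + (1 - absΔ ζ)) ^ s := by
        rw [add_pow, mul_sum]
        exact sum_congr rfl fun l _ => by ring
    _ = sqΔ ζ := by simp

end DeltaSet

lemma Finpartition.exists_two_le_card_of_not_forall_card_eq_one {α : Type*} [DecidableEq α]
    {s : Finset α} {P : Finpartition s} (hP : ¬ ∀ A ∈ P.parts, #A = 1) :
    ∃ A ∈ P.parts, 2 ≤ #A := by
  push Not at hP
  obtain ⟨A, hA, hA1⟩ := hP
  exact ⟨A, hA, by have := card_pos.mpr (P.nonempty_of_mem_parts hA); omega⟩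

lemma Finpartition.card_eq_one_of_mem_bot {α : Type*} [DecidableEq α] {s A : Finset α}
    (hA : A ∈ (⊥ : Finpartition s).parts) : #A = 1 := by
  obtain ⟨a, -, rfl⟩ := Finpartition.mem_bot_iff.mp hA
  exact card_singleton a

theorem partition_expansion_nonsingleton_le_general (ζ : ℕ → ℝ) (hζ : ζ ∈ DeltaSet) (n : ℕ) :
    ∑ π ∈ Finset.univ.filter
        (fun π : Finpartition (Finset.univ : Finset (Fin n)) => ¬ ∀ A ∈ π.parts, A.card = 1),
      rateIntegrand ζ (fun A : π.parts => (A : Finset (Fin n)).card)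
      ≤ ((Fintype.card (Finpartition (Finset.univ : Finset (Fin n))) : ℝ) - 1) * sqΔ ζ := by
  set F := Finset.univ.filter
    fun π : Finpartition (Finset.univ : Finset (Fin n)) => ¬ ∀ A ∈ π.parts, A.card = 1
  have hterm : ∀ π ∈ F,
      rateIntegrand ζ (fun A : π.parts => (A : Finset (Fin n)).card) ≤ sqΔ ζ := by
    intro π hπ
    obtain ⟨A, hA, hA2⟩ :=
      Finpartition.exists_two_le_card_of_not_forall_card_eq_one (mem_filter.mp hπ).2
    exact DeltaSet.rateIntegrand_le_sqΔ hζ _ ⟨⟨A, hA⟩, hA2⟩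
  have hcard : F.card + 1 ≤ Fintype.card (Finpartition (Finset.univ : Finset (Fin n))) :=
    card_lt_card <| filter_ssubset.mpr
      ⟨⊥, mem_univ _, not_not.mpr fun _ => Finpartition.card_eq_one_of_mem_bot⟩
  calc ∑ π ∈ F, rateIntegrand ζ (fun A : π.parts => (A : Finset (Fin n)).card)
      ≤ F.card * sqΔ ζ := by simpa using sum_le_sum hterm
    _ ≤ _ := by
        gcongr
        · exact sqΔ_nonneg ζ
        · exact le_sub_iff_add_le.mpr (by exact_mod_cast hcard)

/-- the part of the expansion coming from partitions that are not the partition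
into singletons is bounded by `(B_n - 1)·(ζ,ζ)`, where `B_n` is the Bell number. -/
theorem partition_expansion_nonsingleton_le (ζ : ℕ → ℝ) (hζ : ζ ∈ DeltaSet) (n : ℕ)
    (hn : 0 < n) :
    ∑ π ∈ Finset.univ.filter
        (fun π : Finpartition (Finset.univ : Finset (Fin n)) => ¬ ∀ A ∈ π.parts, A.card = 1),
      rateIntegrand ζ (fun A : π.parts => (A : Finset (Fin n)).card)
      ≤ ((Fintype.card (Finpartition (Finset.univ : Finset (Fin n))) : ℝ) - 1) * sqΔ ζ :=
  partition_expansion_nonsingleton_le_general ζ hζ n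

end
end

section
/- For every ε > 0 there exists a constant C < ∞ such that the following holds for every l ∈ ℕ: if (v_m)_{m∈ℕ} is a sequence of numbers in [0,1] with Σ_{m∈ℕ} v_m² ≤ l^{−4}, and (b_m)_{m∈ℕ} is an independent family of random variables in which b_m has the binomial distribution with parameters l and v_m, then P( Σ_{m∈ℕ} max(b_m − 1, 0) > ε l ) ≤ C l^{−6}. -/
/-!
Write `x_m = l v_m`; then `x_m ≤ 1 / l` and `Σ x_m² ≤ l⁻²`, and the binomial tail bound gives
`P(b_m ≥ t) ≤ 2 x_m^t`. If `Σ (b_m - 1)_+ > ε l`, then either some `b_m ≥ s + 2` with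
`s = ⌊ε l / 3⌋`, which has probability at most `2 l^(-s) Σ x_m² ≤ 2 l⁻⁶` once `s ≥ 4`, or at least
four distinct `m` have `b_m ≥ 2`, which by independence has probability at most
`(Σ_m P(b_m ≥ 2))⁴ ≤ 16 l⁻⁸`. The finitely many small `l` are absorbed into the constant.
-/

open MeasureTheory ProbabilityTheory Finset
open scoped ENNReal

theorem choose_mul_pow_mul_one_sub_pow_le {x : ℝ} (hx0 : 0 ≤ x) (hx1 : x ≤ 1) (l k : ℕ) :
    (l.choose k : ℝ) * x ^ k * (1 - x) ^ (l - k) ≤ (l * x) ^ k := by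
  have hchoose : (l.choose k : ℝ) ≤ (l : ℝ) ^ k := by exact_mod_cast Nat.choose_le_pow l k
  calc (l.choose k : ℝ) * x ^ k * (1 - x) ^ (l - k) ≤ (l : ℝ) ^ k * x ^ k * 1 := by
        gcongr
        exact pow_le_one₀ (by linarith) (by linarith)
    _ = (l * x) ^ k := by ring

theorem sum_Ico_pow_le_two_mul_pow {r : ℝ} (hr0 : 0 ≤ r) (hr : r ≤ 1 / 2) (m n : ℕ) :
    ∑ k ∈ Ico m n, r ^ k ≤ 2 * r ^ m := by
  calc ∑ k ∈ Ico m n, r ^ k ≤ r ^ m / (1 - r) := geom_sum_Ico_le_of_lt_one hr0 (by linarith)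
    _ ≤ 2 * r ^ m := by
      rw [div_le_iff₀ (by linarith)]
      nlinarith [pow_nonneg hr0 m]

theorem ENNReal.tsum_pi_prod_eq_pow {ι : Type*} (p : ι → ℝ≥0∞) :
    ∀ k : ℕ, ∑' f : Fin k → ι, ∏ j, p (f j) = (∑' i, p i) ^ k
  | 0 => by simp
  | k + 1 => by
    rw [← (Fin.consEquiv fun _ => ι).tsum_eq, ENNReal.tsum_prod', pow_succ',
      ← ENNReal.tsum_pi_prod_eq_pow p k, ← ENNReal.tsum_mul_right]
    simp [Fin.consEquiv, Fin.prod_univ_succ, ENNReal.tsum_mul_left]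

theorem le_of_tsum_sq_le {ι : Type*} {x : ι → ℝ} {r : ℝ} (hx : ∀ i, 0 ≤ x i) (hr : 0 ≤ r)
    (hs : Summable fun i => x i ^ 2) (hsr : ∑' i, x i ^ 2 ≤ r ^ 2) (i : ι) : x i ≤ r :=
  (pow_le_pow_iff_left₀ (hx i) hr two_ne_zero).1 ((hs.le_tsum i fun _ _ => sq_nonneg _).trans hsr)

theorem tsum_sub_one_le_of_encard_le {ι : Type*} (f : ι → ℕ) {s n : ℕ} (hf : ∀ i, f i ≤ s + 1)
    (hcard : {i | 2 ≤ f i}.encard ≤ n) : ∑' i, ((f i - 1 : ℕ) : ℝ≥0∞) ≤ n * s := by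
  obtain ⟨hfin, hncard⟩ := Set.encard_le_coe_iff_finite_ncard_le.1 hcard
  rw [tsum_eq_sum (s := hfin.toFinset) fun i hi => by
    rw [Set.Finite.mem_toFinset, Set.mem_ofPred_eq, not_le] at hi
    simp [Nat.sub_eq_zero_of_le (Nat.lt_succ_iff.1 hi)]]
  calc ∑ i ∈ hfin.toFinset, ((f i - 1 : ℕ) : ℝ≥0∞) ≤ ∑ _i ∈ hfin.toFinset, (s : ℝ≥0∞) :=
        sum_le_sum fun i _ => by have := hf i; exact_mod_cast (by omega : f i - 1 ≤ s)
    _ ≤ n * s := by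
        rw [sum_const, nsmul_eq_mul, ← Set.ncard_eq_toFinset_card _ hfin]
        gcongr

theorem setOf_tsum_sub_one_gt_subset {Ω ι : Type*} (b : ι → Ω → ℕ) {a : ℝ} {k s : ℕ}
    (hks : k * (s : ℝ) ≤ a) :
    {ω | ENNReal.ofReal a < ∑' i, ((b i ω - 1 : ℕ) : ℝ≥0∞)}
      ⊆ (⋃ i, {ω | s + 2 ≤ b i ω}) ∪ {ω | ((k + 1 : ℕ) : ℕ∞) ≤ {i | 2 ≤ b i ω}.encard} := by
  intro ω hω
  by_contra hnot
  simp only [Set.mem_union, Set.mem_iUnion, Set.mem_ofPred_eq, not_or, not_exists, not_le]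
    at hnot
  obtain ⟨hsmall, hfew⟩ := hnot
  rw [Set.mem_ofPred_eq] at hω
  refine hω.not_ge ?_
  calc ∑' i, ((b i ω - 1 : ℕ) : ℝ≥0∞) ≤ k * s :=
        tsum_sub_one_le_of_encard_le _ (fun i => by have := hsmall i; omega)
          (Order.le_of_lt_add_one (by exact_mod_cast hfew))
    _ = ENNReal.ofReal (k * s) := by norm_cast
    _ ≤ ENNReal.ofReal a := ENNReal.ofReal_le_ofReal hks

namespace ProbabilityTheory

variable {Ω : Type*} [MeasurableSpace Ω] {P : Measure Ω}

theorem iIndepFun.iIndepSet_preimage {ι β : Type*} [MeasurableSpace β]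
    {f : ι → Ω → β} (hf : iIndepFun f P) (hfm : ∀ i, Measurable (f i)) {S : ι → Set β}
    (hS : ∀ i, MeasurableSet (S i)) : iIndepSet (fun i => f i ⁻¹' S i) P :=
  (iIndepSet_iff_meas_biInter fun i => hfm i (hS i)).2 fun s =>
    hf.measure_inter_preimage_eq_mul s fun i _ => hS i

theorem iIndepSet.measure_le_encard_le_pow {ι : Type*} [Countable ι]
    {A : ι → Set Ω} (hA : iIndepSet A P) (k : ℕ) :
    P {ω | (k : ℕ∞) ≤ {i | ω ∈ A i}.encard} ≤ (∑' i, P (A i)) ^ k := by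
  have hcover : {ω | (k : ℕ∞) ≤ {i | ω ∈ A i}.encard}
      ⊆ ⋃ (f : Fin k → ι) (_ : f.Injective), ⋂ j, A (f j) := by
    intro ω hω
    obtain ⟨t, hts, htk⟩ := Set.exists_subset_encard_eq hω
    lift t to Finset ι using Set.finite_of_encard_eq_coe htk
    rw [Set.encard_coe_eq_coe_finsetCard, Nat.cast_inj] at htk
    let e := (Finset.equivFinOfCardEq htk).symm
    simp only [Set.mem_iUnion, Set.mem_iInter]
    exact ⟨fun j => e j, Subtype.val_injective.comp e.injective, fun j => hts (e j).2⟩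
  calc P _ ≤ P (⋃ (f : Fin k → ι) (_ : f.Injective), ⋂ j, A (f j)) := measure_mono hcover
    _ ≤ ∑' f : Fin k → ι, ∏ j, P (A (f j)) := by
      refine (measure_iUnion_le _).trans (ENNReal.tsum_le_tsum fun f => ?_)
      by_cases hf : f.Injective
      · simpa [hf] using ((hA.precomp hf).meas_biInter univ).le
      · simp [hf]
    _ = _ := ENNReal.tsum_pi_prod_eq_pow (fun i => P (A i)) k

end ProbabilityTheory

variable {Ω : Type*} [MeasurableSpace Ω] {P : Measure Ω}

def HasBinomialLaw (P : Measure Ω) (f : Ω → ℕ) (l : ℕ) (x : ℝ) : Prop :=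
  ∀ k ≤ l, P {ω | f ω = k} = ENNReal.ofReal ((l.choose k : ℝ) * x ^ k * (1 - x) ^ (l - k))

namespace HasBinomialLaw

variable {f : Ω → ℕ} {l : ℕ} {x : ℝ}

theorem measure_setOf_lt_eq_zero [IsProbabilityMeasure P] (h : HasBinomialLaw P f l x)
    (hf : Measurable f) (hx0 : 0 ≤ x) (hx1 : x ≤ 1) : P {ω | l < f ω} = 0 := by
  have hle : P (f ⁻¹' ↑(range (l + 1))) = 1 := by
    rw [← sum_measure_preimage_singleton _ fun k _ => hf (measurableSet_singleton k)]
    calc ∑ k ∈ range (l + 1), P (f ⁻¹' {k})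
        = ∑ k ∈ range (l + 1), ENNReal.ofReal ((l.choose k : ℝ) * x ^ k * (1 - x) ^ (l - k)) :=
          sum_congr rfl fun k hk => h k (Nat.lt_succ_iff.1 (mem_range.1 hk))
      _ = ENNReal.ofReal ((x + (1 - x)) ^ l) := by
          rw [← ENNReal.ofReal_sum_of_nonneg fun k _ => by
            have : 0 ≤ 1 - x := by linarith
            positivity, add_pow]
          congr 1
          exact sum_congr rfl fun k _ => by ring
      _ = 1 := by simp
  have hcompl : {ω | l < f ω} = (f ⁻¹' ↑(range (l + 1)))ᶜ := by
    ext ω; simp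
  rw [hcompl, prob_compl_eq_zero_iff (hf (Finset.measurableSet _)), hle]

theorem measure_setOf_le_le [IsProbabilityMeasure P] (h : HasBinomialLaw P f l x)
    (hf : Measurable f) (hx0 : 0 ≤ x) (hx1 : x ≤ 1) (hlx : l * x ≤ 1 / 2) (t : ℕ) :
    P {ω | t ≤ f ω} ≤ ENNReal.ofReal (2 * (l * x) ^ t) := by
  have hcover : {ω | t ≤ f ω} ⊆ f ⁻¹' ↑(Ico t (l + 1)) ∪ {ω | l < f ω} := by
    intro ω hω
    by_cases hfl : f ω ≤ l
    · left; simp only [Set.mem_preimage, coe_Ico, Set.mem_Ico]; exact ⟨hω, by omega⟩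
    · right; simpa using hfl
  calc P {ω | t ≤ f ω} ≤ P (f ⁻¹' ↑(Ico t (l + 1))) + P {ω | l < f ω} :=
        (measure_mono hcover).trans (measure_union_le _ _)
    _ = ∑ k ∈ Ico t (l + 1), P (f ⁻¹' {k}) := by
        rw [h.measure_setOf_lt_eq_zero hf hx0 hx1, add_zero,
          sum_measure_preimage_singleton _ fun k _ => hf (measurableSet_singleton k)]
    _ ≤ ∑ k ∈ Ico t (l + 1), ENNReal.ofReal ((l * x) ^ k) := by
        refine sum_le_sum fun k hk => ?_
        change P {ω | f ω = k} ≤ _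
        rw [h k (by simp at hk; omega)]
        exact ENNReal.ofReal_le_ofReal (choose_mul_pow_mul_one_sub_pow_le hx0 hx1 l k)
    _ = ENNReal.ofReal (∑ k ∈ Ico t (l + 1), (l * x) ^ k) :=
        (ENNReal.ofReal_sum_of_nonneg fun k _ => by positivity).symm
    _ ≤ ENNReal.ofReal (2 * (l * x) ^ t) :=
        ENNReal.ofReal_le_ofReal (sum_Ico_pow_le_two_mul_pow (by positivity) hlx t (l + 1))

end HasBinomialLaw

theorem tsum_measure_binomial_tail_le {ι : Type*} [IsProbabilityMeasure P] {b : ι → Ω → ℕ} {l : ℕ}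
    {v : ι → ℝ} {r : ℝ} (hbin : ∀ i, HasBinomialLaw P (b i) l (v i)) (hb : ∀ i, Measurable (b i))
    (hv0 : ∀ i, 0 ≤ v i) (hv1 : ∀ i, v i ≤ 1) (hvr : ∀ i, l * v i ≤ r) (hr : r ≤ 1 / 2)
    (hs : Summable fun i => ((l : ℝ) * v i) ^ 2) (n : ℕ) :
    ∑' i, P {ω | n + 2 ≤ b i ω} ≤ ENNReal.ofReal (2 * r ^ n * ∑' i, ((l : ℝ) * v i) ^ 2) := by
  have hpow : ∀ i, 2 * ((l : ℝ) * v i) ^ (n + 2) ≤ 2 * r ^ n * ((l : ℝ) * v i) ^ 2 := by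
    intro i
    have : 0 ≤ (l : ℝ) * v i := mul_nonneg (Nat.cast_nonneg l) (hv0 i)
    rw [pow_add, ← mul_assoc]
    gcongr
    exact hvr i
  calc ∑' i, P {ω | n + 2 ≤ b i ω}
      ≤ ∑' i, ENNReal.ofReal (2 * r ^ n * ((l : ℝ) * v i) ^ 2) := ENNReal.tsum_le_tsum fun i =>
        ((hbin i).measure_setOf_le_le (hb i) (hv0 i) (hv1 i) ((hvr i).trans hr) (n + 2)).trans
          (ENNReal.ofReal_le_ofReal (hpow i))
    _ = ENNReal.ofReal (2 * r ^ n * ∑' i, ((l : ℝ) * v i) ^ 2) := by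
        rw [← tsum_mul_left, ENNReal.ofReal_tsum_of_nonneg (fun i => by
          have := (mul_nonneg (Nat.cast_nonneg l) (hv0 i)).trans (hvr i)
          positivity) (hs.mul_left _)]

theorem measure_tsum_sub_one_gt_le_of_tsum_sq_le {ι : Type*} [Countable ι]
    [IsProbabilityMeasure P] {b : ι → Ω → ℕ} {l : ℕ} {v : ι → ℝ} {r a : ℝ} {s : ℕ}
    (hb : ∀ i, Measurable (b i)) (hind : iIndepFun b P)
    (hbin : ∀ i, HasBinomialLaw P (b i) l (v i)) (hv0 : ∀ i, 0 ≤ v i) (hv1 : ∀ i, v i ≤ 1)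
    (hvr : ∀ i, l * v i ≤ r) (hr0 : 0 ≤ r) (hr : r ≤ 1 / 2)
    (hs : Summable fun i => ((l : ℝ) * v i) ^ 2) (hsr : ∑' i, ((l : ℝ) * v i) ^ 2 ≤ r ^ 2)
    (hs4 : 4 ≤ s) (hsa : ((3 : ℕ) : ℝ) * s ≤ a) :
    P {ω | ENNReal.ofReal a < ∑' i, ((b i ω - 1 : ℕ) : ℝ≥0∞)} ≤ ENNReal.ofReal (18 * r ^ 6) := by
  have hr1 : r ≤ 1 := hr.trans (by norm_num)
  have hbig : P (⋃ i, {ω | s + 2 ≤ b i ω}) ≤ ENNReal.ofReal (2 * r ^ 6) :=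
    calc P (⋃ i, {ω | s + 2 ≤ b i ω}) ≤ ∑' i, P {ω | s + 2 ≤ b i ω} := measure_iUnion_le _
      _ ≤ ENNReal.ofReal (2 * r ^ s * ∑' i, ((l : ℝ) * v i) ^ 2) :=
          tsum_measure_binomial_tail_le hbin hb hv0 hv1 hvr hr hs s
      _ ≤ ENNReal.ofReal (2 * r ^ 4 * r ^ 2) := by
          gcongr ENNReal.ofReal (2 * ?_ * ?_)
          exact pow_le_pow_of_le_one hr0 hr1 hs4
      _ = ENNReal.ofReal (2 * r ^ 6) := by ring_nf
  have hquad : P {ω | ((3 + 1 : ℕ) : ℕ∞) ≤ {i | 2 ≤ b i ω}.encard}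
      ≤ ENNReal.ofReal (16 * r ^ 6) :=
    calc _ ≤ (∑' i, P (b i ⁻¹' Set.Ici 2)) ^ 4 := by
          simpa using
            (hind.iIndepSet_preimage hb fun _ => measurableSet_Ici).measure_le_encard_le_pow 4
      _ ≤ (ENNReal.ofReal (2 * r ^ 0 * ∑' i, ((l : ℝ) * v i) ^ 2)) ^ 4 := by
          gcongr
          exact tsum_measure_binomial_tail_le hbin hb hv0 hv1 hvr hr hs 0
      _ ≤ (ENNReal.ofReal (2 * r ^ 2)) ^ 4 := by
          rw [pow_zero, mul_one]
          gcongr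
      _ = ENNReal.ofReal (16 * r ^ 2 * r ^ 6) := by
          rw [← ENNReal.ofReal_pow (by positivity)]
          ring_nf
      _ ≤ ENNReal.ofReal (16 * 1 * r ^ 6) := by
          gcongr
          exact pow_le_one₀ hr0 hr1
      _ = ENNReal.ofReal (16 * r ^ 6) := by rw [mul_one]
  calc _ ≤ P ((⋃ i, {ω | s + 2 ≤ b i ω}) ∪ {ω | ((3 + 1 : ℕ) : ℕ∞) ≤ {i | 2 ≤ b i ω}.encard}) :=
        measure_mono (setOf_tsum_sub_one_gt_subset b hsa)
    _ ≤ ENNReal.ofReal (2 * r ^ 6) + ENNReal.ofReal (16 * r ^ 6) :=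
        (measure_union_le _ _).trans (add_le_add hbig hquad)
    _ = ENNReal.ofReal (18 * r ^ 6) := by
        rw [← ENNReal.ofReal_add (by positivity) (by positivity)]
        ring_nf

theorem measure_tsum_sub_one_gt_le [IsProbabilityMeasure P] {l : ℕ} {ε : ℝ} (hl : 2 ≤ l)
    (hεl : 12 ≤ ε * l) {v : ℕ → ℝ} (hv0 : ∀ m, 0 ≤ v m) (hv1 : ∀ m, v m ≤ 1)
    (hvs : Summable fun m => v m ^ 2) (hvsum : ∑' m, v m ^ 2 ≤ ((l : ℝ) ^ 4)⁻¹)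
    {b : ℕ → Ω → ℕ} (hb : ∀ m, Measurable (b m)) (hind : iIndepFun b P)
    (hbin : ∀ m, HasBinomialLaw P (b m) l (v m)) :
    P {ω | ENNReal.ofReal (ε * l) < ∑' m, ((b m ω - 1 : ℕ) : ℝ≥0∞)}
      ≤ ENNReal.ofReal (18 / (l : ℝ) ^ 6) := by
  have hinv : (l : ℝ)⁻¹ ≤ 1 / 2 := by
    rw [one_div]
    exact inv_anti₀ two_pos (by exact_mod_cast hl)
  have hsq : Summable fun m => ((l : ℝ) * v m) ^ 2 := by
    simpa only [mul_pow] using hvs.mul_left ((l : ℝ) ^ 2)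
  have hsq_le : ∑' m, ((l : ℝ) * v m) ^ 2 ≤ ((l : ℝ)⁻¹) ^ 2 := by
    simp_rw [mul_pow]
    rw [tsum_mul_left]
    calc (l : ℝ) ^ 2 * ∑' m, v m ^ 2 ≤ (l : ℝ) ^ 2 * ((l : ℝ) ^ 4)⁻¹ := by gcongr
      _ = ((l : ℝ)⁻¹) ^ 2 := by field_simp
  have hlv : ∀ m, (l : ℝ) * v m ≤ (l : ℝ)⁻¹ :=
    le_of_tsum_sq_le (fun m => mul_nonneg (Nat.cast_nonneg l) (hv0 m)) (by positivity) hsq hsq_le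
  have hs4 : 4 ≤ ⌊ε * l / 3⌋₊ := Nat.le_floor (by push_cast; linarith)
  have hsa : ((3 : ℕ) : ℝ) * ⌊ε * l / 3⌋₊ ≤ ε * l := by
    have := Nat.floor_le (a := ε * l / 3) (by linarith)
    push_cast
    linarith
  calc _ ≤ ENNReal.ofReal (18 * ((l : ℝ)⁻¹) ^ 6) :=
        measure_tsum_sub_one_gt_le_of_tsum_sq_le hb hind hbin hv0 hv1 hlv (by positivity) hinv
          hsq hsq_le hs4 hsa
    _ = ENNReal.ofReal (18 / (l : ℝ) ^ 6) := by rw [inv_pow, div_eq_mul_inv]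

/-- a fourth-moment bound for sums of truncated binomials. For every `ε > 0`
there is a constant `C` such that whenever `Σ_m v_m² ≤ l⁻⁴` and the `b_m` are independent
with `b_m ∼ Binomial(l, v_m)`, the probability that `Σ_m (b_m - 1)_+` exceeds `ε l` is at
most `C l⁻⁶`. -/
theorem binomial_truncated_sum_tail_bound (ε : ℝ) (hε : 0 < ε) :
    ∃ C : ℝ, ∀ l : ℕ, 0 < l →
      ∀ v : ℕ → ℝ, (∀ m, 0 ≤ v m) → (∀ m, v m ≤ 1) →
        Summable (fun m => v m ^ 2) → (∑' m, v m ^ 2) ≤ ((l : ℝ) ^ 4)⁻¹ →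
      ∀ (Ω : Type) (mΩ : MeasurableSpace Ω) (P : Measure Ω), IsProbabilityMeasure P →
      ∀ b : ℕ → Ω → ℕ, (∀ m, Measurable (b m)) →
        iIndepFun b P →
        (∀ m, ∀ k ≤ l, P {ω | b m ω = k} =
          ENNReal.ofReal ((l.choose k : ℝ) * v m ^ k * (1 - v m) ^ (l - k))) →
        P {ω | ENNReal.ofReal (ε * l) < ∑' m, ((b m ω - 1 : ℕ) : ENNReal)}
          ≤ ENNReal.ofReal (C / (l : ℝ) ^ 6) := by
  set L := max 2 ⌈12 / ε⌉₊
  refine ⟨max ((L : ℝ) ^ 6) 18, fun l hl v hv0 hv1 hvs hvsum Ω _ P hP b hb hind hbin => ?_⟩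
  rcases lt_or_ge l L with hlL | hlL
  · calc _ ≤ 1 := prob_le_one
      _ = ENNReal.ofReal 1 := ENNReal.ofReal_one.symm
      _ ≤ _ := by
        refine ENNReal.ofReal_le_ofReal ((one_le_div (by positivity)).2 ?_)
        exact le_max_of_le_left (by gcongr)
  · have hεl : 12 ≤ ε * l := by
      rw [← div_le_iff₀' hε]
      exact Nat.ceil_le.1 (le_of_max_le_right hlL)
    refine (measure_tsum_sub_one_gt_le (le_of_max_le_left hlL) hεl hv0 hv1 hvs hvsum hb hind
      hbin).trans (ENNReal.ofReal_le_ofReal ?_)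
    gcongr
    exact le_max_right _ _
end

section
/- Let E be a compact metrizable topological space and let M_1(E) be the space of Borel probability measures on E equipped with the topology of weak convergence (so M_1(E) is a compact metrizable space). Then the linear span of the constant function 1 together with all functions of the form μ ↦ ∫_{E^n} f dμ^{⊗n}, where n ∈ ℕ and f : E^n → ℝ is continuous, is dense in the space C(M_1(E)) of continuous real-valued functions on M_1(E) with respect to the supremum norm. -/
open MeasureTheory Set BoundedContinuousFunction

/-!
The functions `μ ↦ ∫ g dμ`, `g` bounded continuous, separate the points of `M₁(E)` since
`E` is metrizable, so by Stone–Weierstrass on the compact space `M₁(E)` the algebra they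
generate is dense. By Fubini, a product `∏ᵢ ∫ gᵢ dμ` is `∫ ∏ᵢ gᵢ(xᵢ) dμ^{⊗n}(x)`, so that
algebra lies in the span of the polynomial functions.
-/

noncomputable section

namespace MeasureTheory.ProbabilityMeasure

variable {E : Type*} [TopologicalSpace E] [MeasurableSpace E]

def testAgainst [OpensMeasurableSpace E] (g : E →ᵇ ℝ) : C(ProbabilityMeasure E, ℝ) :=
  ⟨fun μ => ∫ x, g x ∂μ, continuous_integral_boundedContinuousFunction g⟩

@[simp]
lemma testAgainst_apply [OpensMeasurableSpace E] (g : E →ᵇ ℝ) (μ : ProbabilityMeasure E) :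
    testAgainst g μ = ∫ x, g x ∂μ := rfl

def polynomialGenerators (E : Type*) [TopologicalSpace E] [MeasurableSpace E]
    [OpensMeasurableSpace E] : Set C(ProbabilityMeasure E, ℝ) :=
  {G | (∀ μ : ProbabilityMeasure E, G μ = 1) ∨
    ∃ (n : ℕ) (_ : 0 < n) (f : (Fin n → E) → ℝ) (_ : Continuous f),
      ∀ μ : ProbabilityMeasure E, G μ = ∫ x, f x ∂(Measure.pi fun _ : Fin n => (μ : Measure E))}

lemma separatesPoints_adjoin_range_testAgainst [HasOuterApproxClosed E] [BorelSpace E] :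
    (Algebra.adjoin ℝ (range (testAgainst (E := E)))).SeparatesPoints := by
  intro μ ν hne
  obtain ⟨g, hg⟩ : ∃ g : E →ᵇ ℝ, ∫ x, g x ∂μ ≠ ∫ x, g x ∂ν := by
    by_contra! h
    exact hne (toMeasure_injective (ext_of_forall_integral_eq_of_IsFiniteMeasure h))
  exact ⟨testAgainst g, mem_image_of_mem _ (Algebra.subset_adjoin (mem_range_self g)), hg⟩

variable [OpensMeasurableSpace E]

lemma exists_eq_prod_testAgainst_of_mem_closure {G : C(ProbabilityMeasure E, ℝ)}
    (hG : G ∈ Submonoid.closure (range (testAgainst (E := E)))) :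
    ∃ (n : ℕ) (gs : Fin n → E →ᵇ ℝ), G = ∏ i, testAgainst (gs i) := by
  induction hG using Submonoid.closure_induction with
  | mem G hG =>
    obtain ⟨g, rfl⟩ := hG
    exact ⟨1, fun _ => g, by simp⟩
  | one => exact ⟨0, Fin.elim0, by simp⟩
  | mul G₁ G₂ _ _ ih₁ ih₂ =>
    obtain ⟨n, gs, rfl⟩ := ih₁
    obtain ⟨m, hs, rfl⟩ := ih₂
    exact ⟨n + m, Fin.append gs hs, by simp [Fin.prod_univ_add]⟩

lemma prod_testAgainst_mem_polynomialGenerators {n : ℕ} (gs : Fin n → E →ᵇ ℝ) :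
    ∏ i, testAgainst (gs i) ∈ polynomialGenerators E := by
  rcases Nat.eq_zero_or_pos n with rfl | hn
  · exact Or.inl fun μ => by simp
  · refine Or.inr ⟨n, hn, fun x => ∏ i, gs i (x i),
      continuous_finsetProd _ fun i _ => (gs i).continuous.comp (continuous_apply i), fun μ => ?_⟩
    simp [integral_fintype_prod_eq_prod]

lemma adjoin_range_testAgainst_le_span :
    Subalgebra.toSubmodule (Algebra.adjoin ℝ (range (testAgainst (E := E)))) ≤
      Submodule.span ℝ (polynomialGenerators E) := by
  rw [Algebra.adjoin_eq_span]
  refine Submodule.span_mono fun G hG => ?_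
  obtain ⟨n, gs, rfl⟩ := exists_eq_prod_testAgainst_of_mem_closure hG
  exact prod_testAgainst_mem_polynomialGenerators gs

end MeasureTheory.ProbabilityMeasure

/-- for a compact metrizable space `E`, the linear span of the constant
function `1` together with the functions `μ ↦ ∫_{E^n} f dμ^{⊗n}` (`n ∈ ℕ`, `f` continuous)
is dense in `C(M_1(E))`, the continuous functions on the space of Borel probability
measures on `E` with the topology of weak convergence (which is a compact metrizable space,
so that the canonical topology on `C(M_1(E))` is the topology of uniform convergence, i.e.
that of the supremum norm). -/
theorem polynomials_dense_in_continuous_functions_on_probabilityMeasure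
    (E : Type) [TopologicalSpace E] [CompactSpace E] [TopologicalSpace.MetrizableSpace E]
    [MeasurableSpace E] [BorelSpace E] :
    Dense (↑(Submodule.span ℝ
      {G : C(ProbabilityMeasure E, ℝ) |
        (∀ μ : ProbabilityMeasure E, G μ = 1) ∨
        ∃ (n : ℕ) (_ : 0 < n) (f : (Fin n → E) → ℝ) (_ : Continuous f),
          ∀ μ : ProbabilityMeasure E,
            G μ = ∫ x, f x ∂(Measure.pi fun _ : Fin n => (μ : Measure E))}) :
      Set C(ProbabilityMeasure E, ℝ)) := by
  have hdense : Dense (Algebra.adjoin ℝ (range (ProbabilityMeasure.testAgainst (E := E))) :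
      Set C(ProbabilityMeasure E, ℝ)) := by
    rw [dense_iff_closure_eq, ← Subalgebra.topologicalClosure_coe,
      ContinuousMap.subalgebra_topologicalClosure_eq_top_of_separatesPoints _
        ProbabilityMeasure.separatesPoints_adjoin_range_testAgainst, Algebra.coe_top]
  exact hdense.mono ProbabilityMeasure.adjoin_range_testAgainst_le_span

end
end
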